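/- arXiv:2004.02365 — 3 statements merged into one kernel-verified Lean document; each statement's English description precedes it below -/
import Mathlib

section
/- Let 0 < α < 1, ψ be a C¹ increasing function with ψ' never zero, and f ∈ C¹[a,b]. Then I^{α,ψ}_{a+}[^C D^{α,ψ}_{a+} f](t) = f(t) − f(a) for all t ∈ [a,b]. -/
open Real

noncomputable def psiInt (α : ℝ) (ψ : ℝ → ℝ) (a : ℝ) (f : ℝ → ℝ) (t : ℝ) : ℝ :=
  (1 / Real.Gamma α) * ∫ τ in a..t, deriv ψ τ * (ψ t - ψ τ) ^ (α - 1) * f τ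

noncomputable def caputo (α : ℝ) (ψ : ℝ → ℝ) (a : ℝ) (f : ℝ → ℝ) : ℝ → ℝ :=
  psiInt (1 - α) ψ a (fun τ => deriv f τ / deriv ψ τ)

noncomputable def ML (α z : ℝ) : ℝ := ∑' m : ℕ, z ^ m / Real.Gamma (m * α + 1)

/-
The Caputo derivative is `I^{1-α}` applied to `f' / ψ'`, so the claim is the semigroup law
`I^α (I^β g) = I^{α+β} g` at `β = 1 - α`, followed by the fundamental theorem of calculus, since
`I^1 g = ∫ ψ' g`. The semigroup law is Fubini on the triangle `a < s < τ < t`: after the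
substitution `u = ψ τ` the inner integral is the Beta integral
`∫_{ψ s}^{ψ t} (ψ t - u)^{α-1} (u - ψ s)^{β-1} du = B(α, β) (ψ t - ψ s)^{α+β-1}`,
and the same computation, through Tonelli, gives integrability on the triangle.
-/

open Set MeasureTheory ProbabilityTheory Topology

theorem integral_sub_rpow_mul_sub_rpow {a b p q : ℝ} (ha : 0 < a) (hb : 0 < b) (hpq : p < q) :
    ∫ u in p..q, (q - u) ^ (a - 1) * (u - p) ^ (b - 1) = (q - p) ^ (a + b - 1) * beta a b := by
  have hbeta : (beta a b : ℂ) = Complex.betaIntegral b a := by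
    rw [Complex.betaIntegral_eq_Gamma_mul_div _ _ (by simpa) (by simpa), beta]
    push_cast [← Complex.Gamma_ofReal]
    rw [mul_comm, add_comm]
  have hshift := intervalIntegral.integral_comp_add_right
    (fun u => (q - u) ^ (a - 1) * (u - p) ^ (b - 1)) p (a := 0) (b := q - p)
  simp only [add_sub_cancel_right, zero_add, sub_add_cancel] at hshift
  rw [← hshift]
  apply Complex.ofReal_injective
  rw [← intervalIntegral.integral_ofReal, Complex.ofReal_mul,
    Complex.ofReal_cpow (sub_pos.2 hpq).le, hbeta, show ((a + b - 1 : ℝ) : ℂ) = b + a - 1 by push_cast; ring,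
    ← Complex.betaIntegral_scaled _ _ (sub_pos.2 hpq)]
  refine intervalIntegral.integral_congr fun x hx => ?_
  rw [uIcc_of_le (sub_pos.2 hpq).le] at hx
  rw [Complex.ofReal_mul, Complex.ofReal_cpow hx.1, Complex.ofReal_cpow (by linarith [hx.2])]
  push_cast
  ring_nf

theorem MonotoneOn.deriv_nonneg_of_mem_nhds {g : ℝ → ℝ} {s : Set ℝ} {x : ℝ} (hg : MonotoneOn g s)
    (hx : s ∈ 𝓝 x) : 0 ≤ deriv g x := by
  rw [← derivWithin_of_mem_nhds hx]
  exact hg.derivWithin_nonneg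

def triangle (a t : ℝ) : Set (ℝ × ℝ) := {p | a < p.2 ∧ p.2 < p.1 ∧ p.1 < t}

section Triangle

variable {E : Type*} {a t : ℝ}

theorem measurableSet_triangle : MeasurableSet (triangle a t) :=
  ((isOpen_lt continuous_const continuous_snd).inter
    ((isOpen_lt continuous_snd continuous_fst).inter
      (isOpen_lt continuous_fst continuous_const))).measurableSet

theorem indicator_triangle_eq_fst [Zero E] (F : ℝ × ℝ → E) (τ s : ℝ) :
    (triangle a t).indicator F (τ, s)
      = (Ioo a t).indicator (fun τ => (Ioo a τ).indicator (fun s => F (τ, s)) s) τ := by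
  simp only [triangle, indicator_apply, mem_Ioo, mem_ofPred_eq]
  split_ifs <;> grind

theorem indicator_triangle_eq_snd [Zero E] (F : ℝ × ℝ → E) (τ s : ℝ) :
    (triangle a t).indicator F (τ, s)
      = (Ioo a t).indicator (fun s => (Ioo s t).indicator (fun τ => F (τ, s)) τ) s := by
  simp only [triangle, indicator_apply, mem_Ioo, mem_ofPred_eq]
  split_ifs <;> grind

variable [NormedAddCommGroup E] [NormedSpace ℝ E]

theorem integral_indicator_triangle_fst (F : ℝ × ℝ → E) :
    (fun τ => ∫ s, (triangle a t).indicator F (τ, s))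
      = (Ioo a t).indicator (fun τ => ∫ s in Ioo a τ, F (τ, s)) := by
  funext τ
  simp_rw [indicator_triangle_eq_fst F τ]
  by_cases hτ : τ ∈ Ioo a t <;> simp [hτ, integral_indicator measurableSet_Ioo]

theorem integral_indicator_triangle_snd (F : ℝ × ℝ → E) :
    (fun s => ∫ τ, (triangle a t).indicator F (τ, s))
      = (Ioo a t).indicator (fun s => ∫ τ in Ioo s t, F (τ, s)) := by
  funext s
  simp_rw [indicator_triangle_eq_snd F _ s]
  by_cases hs : s ∈ Ioo a t <;> simp [hs, integral_indicator measurableSet_Ioo]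

theorem integral_triangle_swap (F : ℝ × ℝ → E) (hF : IntegrableOn F (triangle a t)) :
    ∫ τ in Ioo a t, ∫ s in Ioo a τ, F (τ, s) = ∫ s in Ioo a t, ∫ τ in Ioo s t, F (τ, s) := by
  have hF' : Integrable ((triangle a t).indicator F) (volume.prod volume) := by
    rw [← Measure.volume_eq_prod]; exact (integrable_indicator_iff measurableSet_triangle).2 hF
  have hswap := integral_integral_swap (f := fun τ s => (triangle a t).indicator F (τ, s)) hF'
  rw [integral_indicator_triangle_fst, integral_indicator_triangle_snd] at hswap
  simpa only [integral_indicator measurableSet_Ioo] using hswap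

theorem integrableOn_triangle_of_nonneg {F : ℝ × ℝ → ℝ} (hF : Measurable F)
    (hF_nonneg : ∀ p ∈ triangle a t, 0 ≤ F p)
    (hsec : ∀ s ∈ Ioo a t, IntegrableOn (fun τ => F (τ, s)) (Ioo s t))
    (hint : IntegrableOn (fun s => ∫ τ in Ioo s t, F (τ, s)) (Ioo a t)) :
    IntegrableOn F (triangle a t) := by
  rw [← integrable_indicator_iff measurableSet_triangle, Measure.volume_eq_prod,
    integrable_prod_iff' (hF.indicator measurableSet_triangle).aestronglyMeasurable]
  constructor
  · refine ae_of_all _ fun s => ?_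
    simp_rw [indicator_triangle_eq_snd F _ s]
    by_cases hs : s ∈ Ioo a t
    · simpa [hs, integrable_indicator_iff measurableSet_Ioo] using hsec s hs
    · simp [hs]
  · have hnorm : (fun s => ∫ τ, ‖(triangle a t).indicator F (τ, s)‖)
        = fun s => ∫ τ, (triangle a t).indicator F (τ, s) := by
      funext s
      congr 1
      funext τ
      exact norm_of_nonneg (indicator_nonneg hF_nonneg _)
    rw [hnorm, integral_indicator_triangle_snd, integrable_indicator_iff measurableSet_Ioo]
    exact hint

end Triangle

noncomputable def psiKernel (ψ : ℝ → ℝ) (α t τ : ℝ) : ℝ := deriv ψ τ * (ψ t - ψ τ) ^ (α - 1)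

section PsiKernel

variable {ψ : ℝ → ℝ} {a s t τ α β : ℝ}

theorem psiInt_eq_setIntegral (g : ℝ → ℝ) (hat : a ≤ t) :
    psiInt α ψ a g t = (Gamma α)⁻¹ * ∫ τ in Ioo a t, psiKernel ψ α t τ * g τ := by
  rw [psiInt, intervalIntegral.integral_of_le hat, integral_Ioc_eq_integral_Ioo, one_div]
  rfl

theorem psiInt_one (g : ℝ → ℝ) : psiInt 1 ψ a g t = ∫ τ in a..t, deriv ψ τ * g τ := by
  simp [psiInt]

theorem psiKernel_nonneg (hmono : MonotoneOn ψ (Icc a t)) (hτ : τ ∈ Ioo a t) :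
    0 ≤ psiKernel ψ α t τ :=
  mul_nonneg (hmono.deriv_nonneg_of_mem_nhds (Icc_mem_nhds hτ.1 hτ.2))
    (rpow_nonneg (sub_nonneg.2 (hmono (Ioo_subset_Icc_self hτ)
      (right_mem_Icc.2 (hτ.1.trans hτ.2).le) hτ.2.le)) _)

theorem setIntegral_psiKernel_mul_comp (hψ : Differentiable ℝ ψ) (hmono : MonotoneOn ψ (Icc s t))
    (hst : s ≤ t) (G : ℝ → ℝ) :
    ∫ τ in Ioo s t, psiKernel ψ α t τ * G (ψ τ) = ∫ u in ψ s..ψ t, (ψ t - u) ^ (α - 1) * G u := by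
  have hIoo : Ioo (min s t) (max s t) = Ioo s t := by rw [min_eq_left hst, max_eq_right hst]
  rw [← intervalIntegral.integral_comp_mul_deriv_of_deriv_nonneg hψ.continuous.continuousOn
      (fun x _ => (hψ x).hasDerivAt)
      (fun x hx => hmono.deriv_nonneg_of_mem_nhds (Icc_mem_nhds (hIoo ▸ hx).1 (hIoo ▸ hx).2)),
    intervalIntegral.integral_of_le hst, integral_Ioc_eq_integral_Ioo]
  congr 1
  funext τ
  simp only [psiKernel, Function.comp]
  ring

theorem setIntegral_psiKernel_mul_rpow (hψ : Differentiable ℝ ψ) (hmono : StrictMonoOn ψ (Icc s t))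
    (hst : s < t) (hα : 0 < α) (hβ : 0 < β) :
    ∫ τ in Ioo s t, psiKernel ψ α t τ * (ψ τ - ψ s) ^ (β - 1)
      = (ψ t - ψ s) ^ (α + β - 1) * beta α β :=
  (setIntegral_psiKernel_mul_comp hψ hmono.monotoneOn hst.le fun u => (u - ψ s) ^ (β - 1)).trans
    (integral_sub_rpow_mul_sub_rpow hα hβ
      (hmono (left_mem_Icc.2 hst.le) (right_mem_Icc.2 hst.le) hst))

theorem integrableOn_psiKernel_mul_rpow (hψ : Differentiable ℝ ψ) (hmono : StrictMonoOn ψ (Icc s t))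
    (hst : s < t) (hα : 0 < α) (hβ : 0 < β) :
    IntegrableOn (fun τ => psiKernel ψ α t τ * (ψ τ - ψ s) ^ (β - 1)) (Ioo s t) := by
  refine Integrable.of_integral_ne_zero ?_
  rw [setIntegral_psiKernel_mul_rpow hψ hmono hst hα hβ]
  have hψst := hmono (left_mem_Icc.2 hst.le) (right_mem_Icc.2 hst.le) hst
  exact (mul_pos (rpow_pos_of_pos (sub_pos.2 hψst) _) (beta_pos hα hβ)).ne'

theorem integrableOn_psiKernel (hψ : Differentiable ℝ ψ) (hmono : StrictMonoOn ψ (Icc s t))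
    (hα : 0 < α) : IntegrableOn (psiKernel ψ α t) (Ioo s t) := by
  rcases lt_or_ge s t with hst | hts
  · simpa using integrableOn_psiKernel_mul_rpow hψ hmono hst hα one_pos
  · simp [Ioo_eq_empty_of_le hts]

theorem psiKernel_mul_psiKernel (ψ : ℝ → ℝ) (α β t τ s : ℝ) :
    psiKernel ψ α t τ * psiKernel ψ β τ s
      = deriv ψ s * (psiKernel ψ α t τ * (ψ τ - ψ s) ^ (β - 1)) := by
  unfold psiKernel
  ring

theorem setIntegral_psiKernel_mul_psiKernel (hψ : Differentiable ℝ ψ)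
    (hmono : StrictMonoOn ψ (Icc s t)) (hst : s < t) (hα : 0 < α) (hβ : 0 < β) :
    ∫ τ in Ioo s t, psiKernel ψ α t τ * psiKernel ψ β τ s = beta α β * psiKernel ψ (α + β) t s := by
  simp_rw [psiKernel_mul_psiKernel, integral_const_mul,
    setIntegral_psiKernel_mul_rpow hψ hmono hst hα hβ, psiKernel]
  ring

theorem integrableOn_psiKernel_mul_psiKernel (hψ : Differentiable ℝ ψ)
    (hmono : StrictMonoOn ψ (Icc s t)) (hst : s < t) (hα : 0 < α) (hβ : 0 < β) :
    IntegrableOn (fun τ => psiKernel ψ α t τ * psiKernel ψ β τ s) (Ioo s t) := by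
  simp_rw [psiKernel_mul_psiKernel]
  exact (integrableOn_psiKernel_mul_rpow hψ hmono hst hα hβ).const_mul _

theorem integrableOn_triangle_psiKernel_mul_psiKernel (hψ : Differentiable ℝ ψ)
    (hmono : StrictMonoOn ψ (Icc a t)) (hα : 0 < α) (hβ : 0 < β) :
    IntegrableOn (fun p : ℝ × ℝ => psiKernel ψ α t p.1 * psiKernel ψ β p.1 p.2) (triangle a t) := by
  have hmono_of_mem (s : ℝ) (hs : s ∈ Ioo a t) : StrictMonoOn ψ (Icc s t) :=
    hmono.mono (Icc_subset_Icc_left hs.1.le)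
  refine integrableOn_triangle_of_nonneg ?_ ?_
    (fun s hs => integrableOn_psiKernel_mul_psiKernel hψ (hmono_of_mem s hs) hs.2 hα hβ) ?_
  · have := hψ.continuous.measurable
    unfold psiKernel
    fun_prop
  · rintro ⟨τ, s⟩ ⟨has, hsτ, hτt⟩
    exact mul_nonneg (psiKernel_nonneg hmono.monotoneOn ⟨has.trans hsτ, hτt⟩)
      (psiKernel_nonneg (hmono.monotoneOn.mono (Icc_subset_Icc_right hτt.le)) ⟨has, hsτ⟩)
  · refine IntegrableOn.congr_fun
      ((integrableOn_psiKernel hψ hmono (add_pos hα hβ)).const_mul (beta α β))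
      (fun s hs => ?_) measurableSet_Ioo
    exact (setIntegral_psiKernel_mul_psiKernel hψ (hmono_of_mem s hs) hs.2 hα hβ).symm

end PsiKernel

theorem psiInt_psiInt {ψ g : ℝ → ℝ} {a t α β C : ℝ} (hψ : Differentiable ℝ ψ)
    (hmono : StrictMonoOn ψ (Icc a t)) (hat : a ≤ t) (hα : 0 < α) (hβ : 0 < β)
    (hg : Measurable g) (hgC : ∀ s ∈ Ioo a t, ‖g s‖ ≤ C) :
    psiInt α ψ a (psiInt β ψ a g) t = psiInt (α + β) ψ a g t := by
  have hKg : IntegrableOn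
      (fun p : ℝ × ℝ => psiKernel ψ α t p.1 * psiKernel ψ β p.1 p.2 * g p.2) (triangle a t) :=
    (integrableOn_triangle_psiKernel_mul_psiKernel hψ hmono hα hβ).mul_bdd
      (hg.comp measurable_snd).aestronglyMeasurable
      ((ae_restrict_iff' measurableSet_triangle).2
        (ae_of_all _ fun p hp => hgC p.2 ⟨hp.1, hp.2.1.trans hp.2.2⟩))
  calc psiInt α ψ a (psiInt β ψ a g) t
      = (Gamma α)⁻¹ * (Gamma β)⁻¹ * ∫ τ in Ioo a t, ∫ s in Ioo a τ,
          psiKernel ψ α t τ * psiKernel ψ β τ s * g s := by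
        rw [psiInt_eq_setIntegral _ hat, mul_assoc, ← integral_const_mul (Gamma β)⁻¹]
        congr 1
        refine setIntegral_congr_fun measurableSet_Ioo fun τ (hτ : τ ∈ Ioo a t) => ?_
        rw [psiInt_eq_setIntegral _ hτ.1.le, mul_left_comm, ← integral_const_mul]
        simp_rw [mul_assoc]
    _ = (Gamma α)⁻¹ * (Gamma β)⁻¹ * ∫ s in Ioo a t, ∫ τ in Ioo s t,
          psiKernel ψ α t τ * psiKernel ψ β τ s * g s := by
        rw [integral_triangle_swap _ hKg]
    _ = (Gamma α)⁻¹ * (Gamma β)⁻¹ * ∫ s in Ioo a t, beta α β * (psiKernel ψ (α + β) t s * g s) := by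
        congr 1
        refine setIntegral_congr_fun measurableSet_Ioo fun s (hs : s ∈ Ioo a t) => ?_
        rw [integral_mul_const, setIntegral_psiKernel_mul_psiKernel hψ
          (hmono.mono (Icc_subset_Icc_left hs.1.le)) hs.2 hα hβ, mul_assoc]
    _ = psiInt (α + β) ψ a g t := by
        have := (Gamma_pos_of_pos hα).ne'
        have := (Gamma_pos_of_pos hβ).ne'
        rw [integral_const_mul, psiInt_eq_setIntegral _ hat, beta]
        field_simp

theorem exists_bound_deriv_div_deriv_of_contDiffOn {f ψ : ℝ → ℝ} {a b : ℝ}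
    (hf : ContDiffOn ℝ 1 f (Icc a b)) (hψ : ContDiff ℝ 1 ψ) (hψ' : ∀ x ∈ Icc a b, deriv ψ x ≠ 0) :
    ∃ C, ∀ s ∈ Ioo a b, ‖deriv f s / deriv ψ s‖ ≤ C := by
  rcases lt_or_ge a b with hab | hba
  · obtain ⟨C, hC⟩ := isCompact_Icc.exists_bound_of_continuousOn
      ((hf.continuousOn_derivWithin (uniqueDiffOn_Icc hab) le_rfl).div
        (hψ.continuous_deriv le_rfl).continuousOn hψ')
    refine ⟨C, fun s hs => ?_⟩
    rw [← derivWithin_of_mem_nhds (Icc_mem_nhds hs.1 hs.2)]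
    exact hC s (Ioo_subset_Icc_self hs)
  · exact ⟨0, fun s hs => absurd (hs.1.trans hs.2) hba.not_gt⟩

theorem stmt3 (a b : ℝ) (ψ : ℝ → ℝ) (hψ : ContDiff ℝ 1 ψ)
    (hmono : StrictMonoOn ψ (Set.Icc a b))
    (hψ' : ∀ x ∈ Set.Icc a b, deriv ψ x ≠ 0)
    (α : ℝ) (hα : 0 < α) (hα1 : α < 1)
    (f : ℝ → ℝ) (hf : ContDiffOn ℝ 1 f (Set.Icc a b)) :
    ∀ t ∈ Set.Icc a b, psiInt α ψ a (caputo α ψ a f) t = f t - f a := by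
  intro t ht
  have hIcc : Icc a t ⊆ Icc a b := Icc_subset_Icc_right ht.2
  obtain ⟨C, hC⟩ := exists_bound_deriv_div_deriv_of_contDiffOn hf hψ hψ'
  rw [caputo, psiInt_psiInt (hψ.differentiable one_ne_zero) (hmono.mono hIcc) ht.1 hα
      (sub_pos.2 hα1) (g := fun τ => deriv f τ / deriv ψ τ) (by fun_prop)
      (fun s hs => hC s ⟨hs.1, hs.2.trans_le ht.2⟩),
    add_sub_cancel, psiInt_one]
  calc ∫ τ in a..t, deriv ψ τ * (deriv f τ / deriv ψ τ)
      = ∫ τ in a..t, deriv f τ := intervalIntegral.integral_congr fun τ hτ =>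
        mul_div_cancel₀ _ (hψ' τ (hIcc (uIcc_of_le ht.1 ▸ hτ)))
    _ = f t - f a := intervalIntegral.integral_deriv_of_contDiffOn_Icc (hf.mono hIcc) ht.1
end

section
/- Let 0 < α < 1, λ ∈ ℝ, and let ψ be a C¹ increasing function with ψ' never zero. Then the function f(t) = E_α(λ(ψ(t) − ψ(a))^α) satisfies ^C D^{α,ψ}_{a+} f(t) = λ f(t) for t > a, where E_α is the one-parameter Mittag-Leffler function. -/
open Real

/-
Substituting `s = ψ τ` turns the `ψ`-Caputo derivative of `F (ψ · - ψ a)` at `t` into the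
classical Caputo derivative of `F` at `ψ t - ψ a`. For `F x = E_α(λ x^α)`, `Γ` grows
superexponentially along `mα + 1`, so the series may be differentiated and integrated term by term:
the `m`-th term of `F'` is `λ^(m+1) x^((m+1)α - 1) / Γ((m+1)α)`, and its Riemann–Liouville integral
of order `1 - α` is a Beta integral, equal to `λ^(m+1) X^(mα) / Γ(mα + 1)`. Summing gives
`λ E_α(λ X^α)`.
-/

open MeasureTheory Set Filter

theorem rpow_mul_exp_neg_le_Gamma_add_one {x : ℝ} (hx : 0 ≤ x) :
    x ^ x * exp (-x) ≤ Gamma (x + 1) := by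
  have hint : IntegrableOn (fun t => exp (-t) * t ^ x) (Ioi 0) := by
    simpa using GammaIntegral_convergent (s := x + 1) (by positivity)
  calc x ^ x * exp (-x) = ∫ t in Ioi x, exp (-t) * x ^ x := by
        rw [integral_mul_const, integral_exp_neg_Ioi, mul_comm]
    _ ≤ ∫ t in Ioi x, exp (-t) * t ^ x :=
        setIntegral_mono_on ((integrableOn_exp_neg_Ioi x).mul_const _)
          (hint.mono_set (Ioi_subset_Ioi hx)) measurableSet_Ioi fun t ht =>
          mul_le_mul_of_nonneg_left (rpow_le_rpow hx (le_of_lt ht) hx) (exp_pos _).le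
    _ ≤ ∫ t in Ioi 0, exp (-t) * t ^ x :=
        setIntegral_mono_set hint
          (ae_restrict_of_forall_mem measurableSet_Ioi fun t ht => by
            have : 0 < t := ht
            positivity)
          (Ioi_subset_Ioi hx).eventuallyLE
    _ = Gamma (x + 1) := by rw [Gamma_eq_integral (by positivity), add_sub_cancel_right]

theorem summable_pow_div_Gamma_mul_add_one {α : ℝ} (hα : 0 < α) (z : ℝ) :
    Summable fun m : ℕ => z ^ m / Gamma (m * α + 1) := by
  have hc : Tendsto (fun m : ℕ => (m * α) ^ α * exp (-α)) atTop atTop :=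
    ((tendsto_rpow_atTop hα).comp
      (tendsto_natCast_atTop_atTop.atTop_mul_const hα)).atTop_mul_const (exp_pos _)
  -- `Γ(mα + 1) ≥ c^m` with `c → ∞`, so the terms are eventually below `2^(-m)`.
  refine Summable.of_norm_bounded_eventually_nat summable_geometric_two
    ((hc.eventually_ge_atTop (2 * |z| + 1)).mono fun m hm => ?_)
  set c := (m * α) ^ α * exp (-α)
  have hc0 : 0 < c := by linarith [abs_nonneg z]
  have hGamma : c ^ m ≤ Gamma (m * α + 1) := by
    calc c ^ m = (m * α) ^ (m * α) * exp (-(m * α)) := by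
          rw [mul_pow, ← rpow_mul_natCast (by positivity), ← exp_nat_mul, mul_comm α]
          ring_nf
      _ ≤ Gamma (m * α + 1) := rpow_mul_exp_neg_le_Gamma_add_one (by positivity)
  calc ‖z ^ m / Gamma (m * α + 1)‖ = |z| ^ m / Gamma (m * α + 1) := by
        rw [norm_div, norm_pow, Real.norm_eq_abs,
          Real.norm_of_nonneg (Gamma_pos_of_pos (by positivity)).le]
    _ ≤ |z| ^ m / c ^ m := div_le_div_of_nonneg_left (by positivity) (by positivity) hGamma
    _ = (|z| / c) ^ m := (div_pow _ _ _).symm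
    _ ≤ (1 / 2) ^ m := pow_le_pow_left₀ (by positivity)
          ((div_le_iff₀ hc0).2 (by linarith [abs_nonneg z])) m

theorem hasDerivAt_ML {α : ℝ} (hα : 0 < α) (z : ℝ) :
    HasDerivAt (ML α) (∑' m : ℕ, (m + 1) * z ^ m / Gamma ((m + 1) * α + 1)) z := by
  set R := |z| + 1
  have hR : 1 ≤ R := by simp [R]
  have hderiv : ∀ (m : ℕ) y, y ∈ Metric.ball (0 : ℝ) R →
      HasDerivAt (fun y => y ^ m / Gamma (m * α + 1)) (m * y ^ (m - 1) / Gamma (m * α + 1)) y :=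
    fun m y _ =>
    (hasDerivAt_pow m y).div_const _
  have hbound : ∀ (m : ℕ) y, y ∈ Metric.ball (0 : ℝ) R →
      ‖m * y ^ (m - 1) / Gamma (m * α + 1)‖ ≤ (2 * R) ^ m / Gamma (m * α + 1) := by
    intro m y hy
    have hG : 0 < Gamma (m * α + 1) := Gamma_pos_of_pos (by positivity)
    have hy : |y| ≤ R := (mem_ball_zero_iff.1 hy).le
    rw [norm_div, Real.norm_of_nonneg hG.le, norm_mul, norm_pow, Real.norm_natCast,
      Real.norm_eq_abs]
    gcongr
    calc (m : ℝ) * |y| ^ (m - 1) ≤ 2 ^ m * R ^ m := by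
          gcongr
          · exact_mod_cast Nat.lt_two_pow_self.le
          · exact (pow_le_pow_left₀ (abs_nonneg y) hy _).trans (pow_le_pow_right₀ hR (m.sub_le 1))
      _ = (2 * R) ^ m := (mul_pow _ _ _).symm
  have hsum := summable_pow_div_Gamma_mul_add_one hα (2 * R)
  have hz : z ∈ Metric.ball (0 : ℝ) R := by simp [R]
  have h := hasDerivAt_tsum_of_isPreconnected hsum Metric.isOpen_ball
    (convex_ball 0 R).isPreconnected hderiv hbound hz
    (summable_pow_div_Gamma_mul_add_one hα z) hz
  rw [(Summable.of_norm_bounded hsum fun m => hbound m z hz).tsum_eq_zero_add] at h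
  simp only [CharP.cast_eq_zero, zero_tsub, pow_zero, mul_one, zero_mul, zero_add, Gamma_one,
    div_one, Nat.cast_add, Nat.cast_one, add_tsub_cancel_right] at h
  exact h

theorem hasDerivAt_ML_mul_rpow {α : ℝ} (hα : 0 < α) (lam : ℝ) {x : ℝ} (hx : 0 < x) :
    HasDerivAt (fun y => ML α (lam * y ^ α))
      (∑' m : ℕ, lam ^ (m + 1) * x ^ ((m + 1) * α - 1) / Gamma ((m + 1) * α)) x := by
  have h := (hasDerivAt_ML hα (lam * x ^ α)).comp x
    ((hasDerivAt_rpow_const (p := α) (Or.inl hx.ne')).const_mul lam)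
  refine h.congr_deriv ?_
  rw [← tsum_mul_right]
  refine tsum_congr fun m => ?_
  have hm : (m + 1) * α ≠ 0 := by positivity
  rw [Gamma_add_one hm, mul_pow, ← rpow_mul_natCast hx.le,
    show (m + 1 : ℝ) * α - 1 = α * m + (α - 1) by ring, rpow_add hx]
  field_simp
  ring

theorem integral_sub_rpow_mul_rpow {p q X : ℝ} (hp : 0 < p) (hq : 0 < q) (hX : 0 < X) :
    ∫ x in (0:ℝ)..X, (X - x) ^ (p - 1) * x ^ (q - 1) =
      Gamma p * Gamma q / Gamma (p + q) * X ^ (p + q - 1) := by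
  have hbeta : Complex.betaIntegral q p * Complex.Gamma (q + p) =
      Complex.Gamma q * Complex.Gamma p := by
    rw [mul_comm, Complex.Gamma_mul_Gamma_eq_betaIntegral (by simpa using hq) (by simpa using hp)]
  have hGamma : Complex.Gamma ((q + p : ℝ) : ℂ) ≠ 0 := by
    rw [Complex.Gamma_ofReal]
    exact_mod_cast (Gamma_pos_of_pos (by positivity)).ne'
  apply Complex.ofReal_injective
  rw [← intervalIntegral.integral_ofReal]
  calc ∫ x in (0:ℝ)..X, (((X - x) ^ (p - 1) * x ^ (q - 1) : ℝ) : ℂ)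
      = ∫ x in (0:ℝ)..X, (x : ℂ) ^ ((q : ℂ) - 1) * ((X : ℂ) - x) ^ ((p : ℂ) - 1) := by
        refine intervalIntegral.integral_congr fun x hx => ?_
        rw [uIcc_of_le hX.le] at hx
        rw [Complex.ofReal_mul, Complex.ofReal_cpow (sub_nonneg.2 hx.2),
          Complex.ofReal_cpow hx.1, mul_comm]
        push_cast
        rfl
    _ = (X : ℂ) ^ ((q : ℂ) + p - 1) * Complex.betaIntegral q p :=
        Complex.betaIntegral_scaled _ _ hX
    _ = _ := by
        push_cast at hGamma
        rw [← mul_div_cancel_right₀ (Complex.betaIntegral q p) hGamma, hbeta]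
        push_cast
        rw [Complex.ofReal_cpow hX.le, ← Complex.Gamma_ofReal, ← Complex.Gamma_ofReal,
          ← Complex.Gamma_ofReal]
        push_cast
        ring_nf

theorem integral_tsum_mul_of_nonneg {β : Type*} [MeasurableSpace β] {μ : Measure β}
    {k : ℕ → β → ℝ} (c : ℕ → ℝ) (hk : ∀ m, Integrable (k m) μ) (hk0 : ∀ m, 0 ≤ᵐ[μ] k m)
    (hsum : Summable fun m => |c m| * ∫ x, k m x ∂μ) :
    ∫ x, ∑' m, c m * k m x ∂μ = ∑' m, c m * ∫ x, k m x ∂μ := by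
  have hnorm : ∀ m, ∫ x, ‖c m * k m x‖ ∂μ = |c m| * ∫ x, k m x ∂μ := fun m => by
    rw [← integral_const_mul]
    refine integral_congr_ae ((hk0 m).mono fun x hx => ?_)
    simp only [norm_mul, Real.norm_eq_abs, abs_of_nonneg hx]
  rw [← integral_tsum_of_summable_integral_norm (fun m => (hk m).const_mul (c m))
    (hsum.congr fun m => (hnorm m).symm)]
  simp only [integral_const_mul]

theorem caputo_comp_sub_eq_caputo_id {ψ F : ℝ → ℝ} (hψ : Differentiable ℝ ψ)
    (hmono : StrictMono ψ) (hF : ∀ x, 0 < x → DifferentiableAt ℝ F x) (α : ℝ) {a t : ℝ}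
    (hat : a ≤ t) :
    caputo α ψ a (fun τ => F (ψ τ - ψ a)) t = caputo α id 0 F (ψ t - ψ a) := by
  set g : ℝ → ℝ := fun s => (ψ t - s) ^ (1 - α - 1) * deriv F (s - ψ a)
  have hintegrand : ∀ τ ∈ Ioc a t, deriv ψ τ * (ψ t - ψ τ) ^ (1 - α - 1) *
      (deriv (fun τ => F (ψ τ - ψ a)) τ / deriv ψ τ) = |deriv ψ τ| • g (ψ τ) := fun τ hτ => by
    have hchain : HasDerivAt (fun τ => F (ψ τ - ψ a)) (deriv F (ψ τ - ψ a) * deriv ψ τ) τ :=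
      (hF _ (sub_pos.2 (hmono hτ.1))).hasDerivAt.comp τ ((hψ τ).hasDerivAt.sub_const (ψ a))
    rw [hchain.deriv, smul_eq_mul, abs_of_nonneg hmono.monotone.deriv_nonneg]
    rcases eq_or_ne (deriv ψ τ) 0 with h | h
    · simp [h]
    · rw [mul_div_cancel_right₀ _ h, mul_assoc]
  simp only [caputo, psiInt, deriv_id, one_mul, div_one, id]
  congr 1
  calc _ = ∫ τ in Ioc a t, |deriv ψ τ| • g (ψ τ) := by
        rw [intervalIntegral.integral_of_le hat,
          setIntegral_congr_fun measurableSet_Ioc hintegrand]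
    _ = ∫ s in ψ a..ψ t, g s := by
        rw [← integral_image_eq_integral_abs_deriv_smul measurableSet_Ioc
          (fun τ _ => (hψ τ).hasDerivAt.hasDerivWithinAt) hmono.injective.injOn,
          hψ.continuous.image_Ioc_of_strictMono hmono,
          intervalIntegral.integral_of_le (hmono.monotone hat)]
    _ = _ := by
        have hshift := intervalIntegral.integral_comp_add_right g (ψ a) (a := 0) (b := ψ t - ψ a)
        rw [zero_add, sub_add_cancel] at hshift
        rw [← hshift]
        refine intervalIntegral.integral_congr fun x _ => ?_
        simp only [g, add_sub_cancel_right, sub_add_eq_sub_sub]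
        rw [sub_right_comm]

theorem caputo_id_ML_mul_rpow {α : ℝ} (hα : 0 < α) (hα1 : α < 1) (lam : ℝ) {X : ℝ}
    (hX : 0 < X) :
    caputo α id 0 (fun x => ML α (lam * x ^ α)) X = lam * ML α (lam * X ^ α) := by
  set k : ℕ → ℝ → ℝ := fun m x => (X - x) ^ (1 - α - 1) * x ^ ((m + 1) * α - 1)
  set c : ℕ → ℝ := fun m => lam ^ (m + 1) / Gamma ((m + 1) * α)
  have hq : ∀ m : ℕ, 0 < (m + 1) * α := fun m => by positivity
  have hk_eq : ∀ m : ℕ, ∫ x in Ioc 0 X, k m x =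
      Gamma (1 - α) * Gamma ((m + 1) * α) / Gamma (m * α + 1) * X ^ (m * α) := fun m => by
    rw [← intervalIntegral.integral_of_le hX.le,
      integral_sub_rpow_mul_rpow (sub_pos.2 hα1) (hq m) hX]
    ring_nf
  have hk0 : ∀ m, 0 ≤ᵐ[volume.restrict (Ioc 0 X)] k m := fun m =>
    ae_restrict_of_forall_mem measurableSet_Ioc fun x hx =>
      mul_nonneg (rpow_nonneg (sub_nonneg.2 hx.2) _) (rpow_nonneg hx.1.le _)
  have hk : ∀ m, IntegrableOn (k m) (Ioc 0 X) := fun m => by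
    refine Integrable.of_integral_ne_zero ?_
    rw [hk_eq]
    have := Gamma_pos_of_pos (sub_pos.2 hα1)
    have := Gamma_pos_of_pos (hq m)
    have : 0 < Gamma (m * α + 1) := Gamma_pos_of_pos (by positivity)
    positivity
  have hterm : ∀ m : ℕ, c m * ∫ x in Ioc 0 X, k m x =
      Gamma (1 - α) * lam * ((lam * X ^ α) ^ m / Gamma (m * α + 1)) := fun m => by
    have := (Gamma_pos_of_pos (hq m)).ne'
    rw [hk_eq, mul_pow, ← rpow_mul_natCast hX.le, mul_comm α]
    simp only [c]
    field_simp
    ring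
  have hsum : Summable fun m => |c m| * ∫ x in Ioc 0 X, k m x :=
    ((summable_pow_div_Gamma_mul_add_one hα _).mul_left _).abs.congr fun m => by
      rw [← hterm, abs_mul, abs_of_nonneg (integral_nonneg_of_ae (hk0 m))]
  have hderiv : ∀ x ∈ Ioc 0 X, (X - x) ^ (1 - α - 1) * deriv (fun y => ML α (lam * y ^ α)) x =
      ∑' m, c m * k m x := fun x hx => by
    rw [(hasDerivAt_ML_mul_rpow hα lam hx.1).deriv, ← tsum_mul_left]
    exact tsum_congr fun m => by ring
  simp only [caputo, psiInt, deriv_id, one_mul, div_one, id]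
  rw [intervalIntegral.integral_of_le hX.le, setIntegral_congr_fun measurableSet_Ioc hderiv,
    integral_tsum_mul_of_nonneg c hk hk0 hsum, tsum_congr hterm, tsum_mul_left, ML]
  have := (Gamma_pos_of_pos (sub_pos.2 hα1)).ne'
  field_simp

theorem stmt7_general (a : ℝ) (ψ : ℝ → ℝ) (hψ : ContDiff ℝ 1 ψ)
    (hmono : StrictMono ψ)
    (α lam : ℝ) (hα : 0 < α) (hα1 : α < 1) :
    ∀ t, a < t →
      caputo α ψ a (fun τ => ML α (lam * (ψ τ - ψ a) ^ α)) t =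
        lam * ML α (lam * (ψ t - ψ a) ^ α) := by
  intro t ht
  rw [caputo_comp_sub_eq_caputo_id (hψ.differentiable one_ne_zero) hmono
    (fun x hx => (hasDerivAt_ML_mul_rpow hα lam hx).differentiableAt) α ht.le]
  exact caputo_id_ML_mul_rpow hα hα1 lam (sub_pos.2 (hmono ht))

theorem stmt7 (a : ℝ) (ψ : ℝ → ℝ) (hψ : ContDiff ℝ 1 ψ)
    (hmono : StrictMono ψ) (hψ' : ∀ x, deriv ψ x ≠ 0)
    (α lam : ℝ) (hα : 0 < α) (hα1 : α < 1) :
    ∀ t, a < t →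
      caputo α ψ a (fun τ => ML α (lam * (ψ τ - ψ a) ^ α)) t =
        lam * ML α (lam * (ψ t - ψ a) ^ α) :=
  stmt7_general a ψ hψ hmono α lam hα hα1
end

section
/- For the gas-dynamic HAM recursion with ℏ = −1, the iterates satisfy u_m(x,t) = e^{−x} (ψ(t)−ψ(a))^{mα}/Γ(mα+1) for all m ≥ 0, where the recursion is u_m = −I^{α,ψ}_{a+}[Σ_{i=0}^{m−1} u_i ∂_x u_{m−1−i} − u_{m−1} + Σ_{i=0}^{m−1} u_i u_{m−1−i}] and u_0(x,t) = e^{−x}. -/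
/-!
Since `∂ₓ e^{-x} = -e^{-x}`, every iterate of the form `e^{-x} c(t)` satisfies `∂ₓ uⱼ = -uⱼ`, so
the two nonlinear sums in the recursion cancel term by term and it collapses to
`u_m = I^{α,ψ}_{a+} u_{m-1}`. The substitution `s = ψ τ` turns the `ψ`-fractional integral of
`(ψ τ - ψ a)^β` into a Beta integral, giving the power rule
`I^{α,ψ}_{a+} (ψ - ψ a)^β = Γ(β+1)/Γ(α+β+1) (ψ - ψ a)^{α+β}`, which advances the exponent by `α`.
-/

open Real

open MeasureTheory Set

theorem integral_rpow_mul_sub_rpow {p q L : ℝ} (hp : 0 < p) (hq : 0 < q) (hL : 0 < L) :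
    ∫ x in (0 : ℝ)..L, x ^ (p - 1) * (L - x) ^ (q - 1) =
      Gamma p * Gamma q / Gamma (p + q) * L ^ (p + q - 1) := by
  apply Complex.ofReal_injective
  rw [← intervalIntegral.integral_ofReal]
  have hcast : ∀ x ∈ uIcc 0 L, (((x ^ (p - 1) * (L - x) ^ (q - 1) : ℝ)) : ℂ) =
      (x : ℂ) ^ ((p : ℂ) - 1) * ((L : ℂ) - x) ^ ((q : ℂ) - 1) := by
    intro x hx
    rw [uIcc_of_le hL.le] at hx
    push_cast [Complex.ofReal_mul, Complex.ofReal_cpow hx.1,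
      Complex.ofReal_cpow (sub_nonneg.2 hx.2)]
    rfl
  rw [intervalIntegral.integral_congr hcast, Complex.betaIntegral_scaled _ _ hL,
    Complex.betaIntegral_eq_Gamma_mul_div _ _ (by simpa using hp) (by simpa using hq)]
  push_cast [Complex.ofReal_cpow hL.le, ← Complex.Gamma_ofReal]
  ring

theorem integral_sub_rpow_mul_rpow_sub {α β c d : ℝ} (hα : 0 < α) (hβ : -1 < β) (hcd : c < d) :
    ∫ u in c..d, (d - u) ^ (α - 1) * (u - c) ^ β =
      Gamma α * Gamma (β + 1) / Gamma (α + β + 1) * (d - c) ^ (α + β) := by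
  have hbeta := integral_rpow_mul_sub_rpow (by linarith : 0 < β + 1) hα (sub_pos.2 hcd)
  have hshift := intervalIntegral.integral_comp_sub_right
    (fun u => u ^ (β + 1 - 1) * (d - c - u) ^ (α - 1)) (a := c) (b := d) c
  simp only [sub_self, add_sub_cancel_right, sub_sub_sub_cancel_right] at hshift hbeta
  rw [intervalIntegral.integral_congr fun u _ => mul_comm _ _, hshift, hbeta]
  ring_nf

theorem psiInt_rpow_sub {α β a t : ℝ} {ψ : ℝ → ℝ} (hψ : Differentiable ℝ ψ) (hmono : Monotone ψ)
    (hα : 0 < α) (hβ : 0 ≤ β) (hat : a ≤ t) :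
    psiInt α ψ a (fun τ => (ψ τ - ψ a) ^ β) t =
      Gamma (β + 1) / Gamma (α + β + 1) * (ψ t - ψ a) ^ (α + β) := by
  set g : ℝ → ℝ := fun u => (ψ t - u) ^ (α - 1) * (u - ψ a) ^ β
  have hsmul : (fun τ => deriv ψ τ * (ψ t - ψ τ) ^ (α - 1) * (ψ τ - ψ a) ^ β) =
      fun τ => deriv ψ τ • g (ψ τ) := by
    funext τ; rw [smul_eq_mul, mul_assoc]
  rw [psiInt, intervalIntegral.integral_of_le hat, ← integral_Icc_eq_integral_Ioc, hsmul,
    integral_Icc_deriv_smul_of_deriv_nonneg hψ.continuous.continuousOn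
      (fun x _ => (hψ x).hasDerivAt) (fun _ _ => hmono.deriv_nonneg) hat,
    integral_Icc_eq_integral_Ioc, ← intervalIntegral.integral_of_le (hmono hat)]
  rcases (hmono hat).eq_or_lt with hψat | hψat
  · simp [hψat, zero_rpow (by positivity : α + β ≠ 0)]
  rw [integral_sub_rpow_mul_rpow_sub hα (by linarith) hψat]
  field_simp [(Gamma_pos_of_pos hα).ne']

theorem psiInt_congr {α a t : ℝ} {ψ f g : ℝ → ℝ} (hat : a ≤ t) (hfg : EqOn f g (Icc a t)) :
    psiInt α ψ a f t = psiInt α ψ a g t := by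
  rw [psiInt, psiInt, intervalIntegral.integral_congr fun τ hτ => ?_]
  rw [uIcc_of_le hat] at hτ
  rw [hfg hτ]

theorem psiInt_const_mul (α a t c : ℝ) (ψ f : ℝ → ℝ) :
    psiInt α ψ a (fun τ => c * f τ) t = c * psiInt α ψ a f t := by
  simp only [psiInt, mul_left_comm _ c, intervalIntegral.integral_const_mul]

theorem deriv_exp_neg_mul (c x : ℝ) : deriv (fun y => exp (-y) * c) x = -(exp (-x) * c) := by
  rw [((hasDerivAt_neg x).exp.mul_const c).deriv]
  ring

theorem stmt19_general (a : ℝ) (ψ : ℝ → ℝ) (hψ : ContDiff ℝ 1 ψ)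
    (hmono : StrictMono ψ)
    (α : ℝ) (hα : 0 < α)
    (u : ℕ → ℝ → ℝ → ℝ)
    (h0 : ∀ x t, u 0 x t = Real.exp (-x))
    (hrec : ∀ m : ℕ, 1 ≤ m → ∀ x t,
      u m x t =
        -psiInt α ψ a
          (fun τ =>
            (∑ i ∈ Finset.range m, u i x τ * deriv (fun y => u (m - 1 - i) y τ) x) -
              u (m - 1) x τ +
              ∑ i ∈ Finset.range m, u i x τ * u (m - 1 - i) x τ) t) :
    ∀ m : ℕ, ∀ x, ∀ t, a ≤ t →
      u m x t = Real.exp (-x) * (ψ t - ψ a) ^ ((m : ℝ) * α) / Real.Gamma (m * α + 1) := by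
  intro m
  induction m using Nat.strong_induction_on with
  | _ m ih =>
  intro x t hat
  rcases Nat.eq_zero_or_pos m with rfl | hm
  · simp [h0]
  have hderiv : ∀ j < m, ∀ τ, a ≤ τ → deriv (fun y => u j y τ) x = -u j x τ := by
    intro j hj τ hτ
    have hu : (fun y => u j y τ) =
        fun y => exp (-y) * ((ψ τ - ψ a) ^ ((j : ℝ) * α) / Gamma (j * α + 1)) :=
      funext fun y => by rw [ih j hj y τ hτ, mul_div_assoc]
    rw [hu, deriv_exp_neg_mul, ih j hj x τ hτ, mul_div_assoc]
  set β : ℝ := ((m - 1 : ℕ) : ℝ) * α with hβ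
  have hintegrand : EqOn
      (fun τ => (∑ i ∈ Finset.range m, u i x τ * deriv (fun y => u (m - 1 - i) y τ) x) -
        u (m - 1) x τ + ∑ i ∈ Finset.range m, u i x τ * u (m - 1 - i) x τ)
      (fun τ => -(exp (-x) / Gamma (β + 1)) * (ψ τ - ψ a) ^ β) (Icc a t) := by
    intro τ hτ
    have hcancel : (∑ i ∈ Finset.range m, u i x τ * deriv (fun y => u (m - 1 - i) y τ) x) +
        ∑ i ∈ Finset.range m, u i x τ * u (m - 1 - i) x τ = 0 := by
      rw [← Finset.sum_add_distrib]
      refine Finset.sum_eq_zero fun i _ => ?_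
      rw [hderiv _ (by omega) τ hτ.1]
      ring
    dsimp only
    rw [ih (m - 1) (by omega) x τ hτ.1]
    linear_combination hcancel
  have hmβ : α + β = (m : ℝ) * α := by
    rw [hβ, Nat.cast_sub hm, Nat.cast_one]
    ring
  rw [hrec m hm x t, psiInt_congr hat hintegrand, psiInt_const_mul,
    psiInt_rpow_sub (hψ.differentiable one_ne_zero) hmono.monotone hα (by positivity) hat, hmβ]
  field_simp [(Gamma_pos_of_pos (by positivity : 0 < β + 1)).ne']

theorem stmt19 (a : ℝ) (ψ : ℝ → ℝ) (hψ : ContDiff ℝ 1 ψ)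
    (hmono : StrictMono ψ) (hψ' : ∀ x, deriv ψ x ≠ 0)
    (α : ℝ) (hα : 0 < α) (hα1 : α < 1)
    (u : ℕ → ℝ → ℝ → ℝ)
    (h0 : ∀ x t, u 0 x t = Real.exp (-x))
    (hrec : ∀ m : ℕ, 1 ≤ m → ∀ x t,
      u m x t =
        -psiInt α ψ a
          (fun τ =>
            (∑ i ∈ Finset.range m, u i x τ * deriv (fun y => u (m - 1 - i) y τ) x) -
              u (m - 1) x τ +
              ∑ i ∈ Finset.range m, u i x τ * u (m - 1 - i) x τ) t) :
    ∀ m : ℕ, ∀ x, ∀ t, a ≤ t →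
      u m x t = Real.exp (-x) * (ψ t - ψ a) ^ ((m : ℝ) * α) / Real.Gamma (m * α + 1) :=
  stmt19_general a ψ hψ hmono α hα u h0 hrec
end
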